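/- (Martingale strategy.) Let G ≤ Aut(T) be a closed subgroup. Assume that (i) the fixed-point process {X_n} of G is a martingale, and (ii) for every r > 0 there exist ε = ε(r) > 0 and m = m(r) such that μ_G(X_{n+m} = r | X_n = r) ≤ 1 − ε for infinitely many n ≥ 1. Then the fixed-point process of G is eventually zero μ_G-almost surely; in particular FPP(G) = 0. -/

import Mathlib

/-!
A nonnegative martingale is bounded in `L¹`, so it converges almost surely; being `ℕ`-valued, the
fixed-point process is then almost surely eventually constant. (The martingale hypothesis only
conditions on the atoms `{X_1 = t_1, …, X_n = t_n}`, but the natural filtration is generated by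
these countably many atoms, which makes it a martingale in the measure-theoretic sense.)
For `r ≥ 1`, the hypothesis on `μ(X_{n+m} = r | X_n = r)` forces the event `{X_n = r eventually}`
to be null, so almost surely `X_n` is eventually `0`. An element fixing an end has `X_n ≥ 1` for
all `n`.
-/

open MeasureTheory

namespace ArbGal

/-- Vertices of the `d`-regular rooted tree: the free monoid on `{0, …, d-1}`. -/
abbrev V (d : ℕ) := List (Fin d)

instance (d : ℕ) : TopologicalSpace (V d) := ⊥

theorem Equiv.Perm.apply_inv_self {α : Type*} (f : Equiv.Perm α) (x : α) : f (f⁻¹ x) = x :=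
  Equiv.apply_symm_apply f x

theorem Equiv.Perm.inv_apply_self {α : Type*} (f : Equiv.Perm α) (x : α) : f⁻¹ (f x) = x :=
  Equiv.symm_apply_apply f x

/-- A permutation of the vertices is an automorphism of the rooted tree iff it
preserves the level of vertices and the prefix (ancestor) relation. -/
def IsTreeAut {d : ℕ} (g : Equiv.Perm (V d)) : Prop :=
  (∀ v : V d, (g v).length = v.length) ∧ ∀ u v : V d, u <+: v → g u <+: g v

/-- The automorphism group `Aut(T)` of the `d`-regular rooted tree, realized as a
subgroup of the permutation group of the set of vertices. -/
def treeAutGroup (d : ℕ) : Subgroup (Equiv.Perm (V d)) where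
  carrier := {g | IsTreeAut g}
  one_mem' := ⟨fun _ => rfl, fun _ _ h => h⟩
  mul_mem' := by
    rintro a b ⟨ha1, ha2⟩ ⟨hb1, hb2⟩
    refine ⟨fun v => ?_, fun u v h => ?_⟩
    · simp only [Equiv.Perm.mul_apply, ha1, hb1]
    · simpa only [Equiv.Perm.mul_apply] using ha2 _ _ (hb2 _ _ h)
  inv_mem' := by
    rintro g ⟨h1, h2⟩
    have hlen : ∀ v : V _, (g⁻¹ v).length = v.length := by
      intro v
      have := h1 (g⁻¹ v)
      rw [Equiv.Perm.apply_inv_self] at this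
      exact this.symm
    refine ⟨hlen, fun u v huv => ?_⟩
    have h3 : (g⁻¹ v).take (g⁻¹ u).length <+: g⁻¹ v := List.take_prefix _ _
    have h4 : g ((g⁻¹ v).take (g⁻¹ u).length) <+: g (g⁻¹ v) := h2 _ _ h3
    rw [Equiv.Perm.apply_inv_self] at h4
    have hlen4 : (g ((g⁻¹ v).take (g⁻¹ u).length)).length = u.length := by
      rw [h1, List.length_take, hlen, hlen]
      exact min_eq_left huv.length_le
    have h5 : g ((g⁻¹ v).take (g⁻¹ u).length) = u := by
      rcases List.prefix_or_prefix_of_prefix h4 huv with h | h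
      · exact h.eq_of_length hlen4
      · exact (h.eq_of_length hlen4.symm).symm
    have h6 : (g⁻¹ v).take (g⁻¹ u).length = g⁻¹ u := by
      apply g.injective
      rw [h5, Equiv.Perm.apply_inv_self]
    rw [← h6]
    exact List.take_prefix _ _

/-- The group `Aut(T)`, as a type. -/
abbrev AutT (d : ℕ) := ↥(treeAutGroup d)

/-- `Aut(T)` carries the congruence topology, i.e. the topology of pointwise
convergence on the (discrete) set of vertices. -/
instance (d : ℕ) : TopologicalSpace (Equiv.Perm (V d)) :=
  TopologicalSpace.induced (fun g => (g : V d → V d)) Pi.topologicalSpace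

variable {d : ℕ}

lemma autT_len (g : AutT d) (v : V d) : ((g : Equiv.Perm (V d)) v).length = v.length := g.2.1 v

lemma autT_prefix (g : AutT d) {u v : V d} (h : u <+: v) :
    (g : Equiv.Perm (V d)) u <+: (g : Equiv.Perm (V d)) v := g.2.2 u v h

/-- The underlying function of the section `g|_v`. -/
def secFun (g : AutT d) (v w : V d) : V d := ((g : Equiv.Perm (V d)) (v ++ w)).drop v.length

lemma sec_spec (g : AutT d) (v w : V d) :
    (g : Equiv.Perm (V d)) (v ++ w) = (g : Equiv.Perm (V d)) v ++ secFun g v w := by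
  have h1 : (g : Equiv.Perm (V d)) v <+: (g : Equiv.Perm (V d)) (v ++ w) :=
    autT_prefix g (List.prefix_append v w)
  have h2 := autT_len g v
  have h3 : (g : Equiv.Perm (V d)) v = ((g : Equiv.Perm (V d)) (v ++ w)).take v.length := by
    rw [← h2]; exact List.prefix_iff_eq_take.mp h1
  conv_lhs => rw [← List.take_append_drop v.length ((g : Equiv.Perm (V d)) (v ++ w))]
  rw [← h3]; rfl

lemma coe_inv (g : AutT d) : ((g⁻¹ : AutT d) : Equiv.Perm (V d)) = (g : Equiv.Perm (V d))⁻¹ := rfl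

lemma sec_spec' (g : AutT d) (v w : V d) :
    (g : Equiv.Perm (V d)) (v ++ w)
      = (g : Equiv.Perm (V d)) v ++ List.drop v.length ((g : Equiv.Perm (V d)) (v ++ w)) :=
  sec_spec g v w

/-- The section (state) `g|_v` of a tree automorphism `g` at the vertex `v`; it is
the unique automorphism satisfying `g(v·w) = g(v)·(g|_v)(w)` for all `w`. -/
def sectionAt (g : AutT d) (v : V d) : AutT d :=
  ⟨{ toFun := secFun g v
     invFun := secFun g⁻¹ ((g : Equiv.Perm (V d)) v)
     left_inv := by
       intro w
       show secFun g⁻¹ ((g : Equiv.Perm (V d)) v) (secFun g v w) = w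
       unfold secFun
       rw [coe_inv, ← sec_spec' g v w, Equiv.Perm.inv_apply_self, autT_len, List.drop_left]
     right_inv := by
       intro w
       show secFun g v (secFun g⁻¹ ((g : Equiv.Perm (V d)) v) w) = w
       unfold secFun
       rw [coe_inv]
       have h := sec_spec' g⁻¹ ((g : Equiv.Perm (V d)) v) w
       rw [coe_inv, Equiv.Perm.inv_apply_self] at h
       rw [← h, Equiv.Perm.apply_inv_self, ← autT_len g v, List.drop_left] },
   by
     constructor
     · intro w
       show (secFun g v w).length = w.length
       unfold secFun
       rw [List.length_drop, autT_len, List.length_append]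
       omega
     · intro u w huw
       show secFun g v u <+: secFun g v w
       have h1 : v ++ u <+: v ++ w := by
         obtain ⟨c, rfl⟩ := huw
         rw [← List.append_assoc]
         exact List.prefix_append _ _
       have h2 := autT_prefix g h1
       rw [sec_spec g v u, sec_spec g v w] at h2
       obtain ⟨c, hc⟩ := h2
       rw [List.append_assoc] at hc
       exact ⟨c, List.append_cancel_left hc⟩⟩

/-- The pointwise stabilizer `St(n)` of the `n`-th level, as a subgroup of `Aut(T)`. -/
def levelStab (d n : ℕ) : Subgroup (AutT d) where
  carrier := {g | ∀ v : V d, v.length = n → (g : Equiv.Perm (V d)) v = v}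
  one_mem' := fun _ _ => rfl
  mul_mem' := by
    rintro a b ha hb v hv
    show (a : Equiv.Perm (V d)) ((b : Equiv.Perm (V d)) v) = v
    rw [hb v hv, ha v hv]
  inv_mem' := by
    intro g hg v hv
    show (g : Equiv.Perm (V d))⁻¹ v = v
    conv_lhs => rw [← hg v hv]
    exact Equiv.Perm.inv_apply_self _ _

/-- Two automorphisms agree on the truncated tree `T^m` (have the same image
under `π_m`). -/
def truncEq (d : ℕ) (m : ℕ) (g h : AutT d) : Prop :=
  ∀ w : V d, w.length ≤ m → (g : Equiv.Perm (V d)) w = (h : Equiv.Perm (V d)) w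

/-- `St_G(n)_v^m = π_m(G)`: the projection of the `n`-th level stabilizer of `G`
at the vertex `v`, truncated at depth `m`, coincides with `π_m(G)`. -/
def SectModEq (d : ℕ) (G : Subgroup (AutT d)) (n m : ℕ) (v : V d) : Prop :=
  ∀ a : AutT d,
    (∃ g, g ∈ G ∧ g ∈ levelStab d n ∧ (g : Equiv.Perm (V d)) v = v ∧
        truncEq d m (sectionAt g v) a)
    ↔ (∃ b ∈ G, truncEq d m b a)

/-- `G` is self-similar: all sections of elements of `G` belong to `G`. -/
def SelfSimilar (d : ℕ) (G : Subgroup (AutT d)) : Prop :=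
  ∀ g ∈ G, ∀ v : V d, sectionAt g v ∈ G

/-- `G` is level-transitive. -/
def LevelTrans (d : ℕ) (G : Subgroup (AutT d)) : Prop :=
  ∀ v w : V d, v.length = w.length → ∃ g ∈ G, (g : Equiv.Perm (V d)) v = w

/-- `G` is fractal: self-similar, level-transitive, and every projection
`G_v = φ_v(st_G(v))` is all of `G`. -/
def Fractal (d : ℕ) (G : Subgroup (AutT d)) : Prop :=
  SelfSimilar d G ∧ LevelTrans d G ∧
    ∀ v : V d, ∀ h ∈ G, ∃ g ∈ G, (g : Equiv.Perm (V d)) v = v ∧ sectionAt g v = h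

/-- For every `n ≥ 1`, the level stabilizer `St_G(n)` acts level-transitively on the
subtrees rooted at the vertices of level `n`. -/
def StabLevelTrans (d : ℕ) (G : Subgroup (AutT d)) : Prop :=
  ∀ n : ℕ, 1 ≤ n → ∀ v u w : V d, v.length = n → u.length = w.length →
    ∃ g ∈ G ⊓ levelStab d n, (g : Equiv.Perm (V d)) (v ++ u) = v ++ w

/-- A fractal group `G ≤ Aut(T)` is mixing with delay constant `N`. -/
def MixingWithDelay (d : ℕ) (G : Subgroup (AutT d)) (N : ℕ) : Prop :=
  Fractal d G ∧ StabLevelTrans d G ∧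
    ∀ m : ℕ, 1 ≤ m → ∀ n : ℕ, 1 ≤ n → ∀ v : V d, n + N ≤ v.length → SectModEq d G n m v

/-- A fractal group `G ≤ Aut(T)` is mixing: its level stabilizers act
level-transitively below their level, and for all `n, m ≥ 1` there is a delay
`N = N(m)` with `St_G(n)_v^m = π_m(G)` whenever `|v| ≥ n + N`. -/
def Mixing (d : ℕ) (G : Subgroup (AutT d)) : Prop :=
  Fractal d G ∧ StabLevelTrans d G ∧
    ∀ m : ℕ, 1 ≤ m → ∃ N : ℕ,
      ∀ n : ℕ, 1 ≤ n → ∀ v : V d, n + N ≤ v.length → SectModEq d G n m v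

/-- `g` fixes an end of the tree `T`, i.e. an infinite rooted path. -/
def FixesEnd (d : ℕ) (g : AutT d) : Prop :=
  ∃ ω : ℕ → Fin d, ∀ n : ℕ,
    (g : Equiv.Perm (V d)) (List.ofFn (fun i : Fin n => ω i)) = List.ofFn (fun i : Fin n => ω i)

/-- `X_n(g)`: the number of vertices of level `n` fixed by `g`. -/
noncomputable def Xfix (d n : ℕ) (g : AutT d) : ℕ :=
  Set.ncard {w : Fin n → Fin d |
    (g : Equiv.Perm (V d)) (List.ofFn w) = List.ofFn w}

/-- The Borel σ-algebra on a closed subgroup of `Aut(T)`. -/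
instance (d : ℕ) (G : Subgroup (AutT d)) : MeasurableSpace ↥G := borel ↥G

/-- The fixed-point process `{X_n}` of `G`, with respect to the measure `μ` on `G`,
is a martingale. -/
def FPMartingale (d : ℕ) (G : Subgroup (AutT d)) (μ : Measure ↥G) : Prop :=
  (∀ n : ℕ, 1 ≤ n → Integrable (fun g : ↥G => (Xfix d n (g : AutT d) : ℝ)) μ) ∧
  ∀ n : ℕ, 1 ≤ n → ∀ t : ℕ → ℝ,
    μ {g : ↥G | ∀ i, 1 ≤ i → i ≤ n → (Xfix d i (g : AutT d) : ℝ) = t i} ≠ 0 →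
    ∫ g in {g : ↥G | ∀ i, 1 ≤ i → i ≤ n → (Xfix d i (g : AutT d) : ℝ) = t i},
        (Xfix d (n + 1) (g : AutT d) : ℝ) ∂μ
      = t n * (μ {g : ↥G | ∀ i, 1 ≤ i → i ≤ n → (Xfix d i (g : AutT d) : ℝ) = t i}).toReal


end ArbGal

open Filter Topology

theorem exists_eventually_eq_of_tendsto_natCast {ι : Type*} {l : Filter ι} [l.NeBot]
    {a : ι → ℕ} {c : ℝ} (h : Tendsto (fun i => (a i : ℝ)) l (𝓝 c)) :
    ∃ k : ℕ, ∀ᶠ i in l, a i = k := by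
  obtain ⟨k, rfl⟩ : c ∈ Set.range ((↑) : ℕ → ℝ) :=
    Nat.isClosedEmbedding_coe_real.isClosed_range.mem_of_tendsto h
      (Eventually.of_forall fun i => ⟨a i, rfl⟩)
  have hk : Tendsto a l (𝓝 k) := Nat.isClosedEmbedding_coe_real.isEmbedding.tendsto_nhds_iff.2 h
  rw [nhds_discrete, tendsto_pure] at hk
  exact ⟨k, hk⟩

theorem ENNReal.le_mul_of_div_le {a b c : ENNReal} (hab : a ≤ b) (hb : b ≠ ⊤) (h : a / b ≤ c) :
    a ≤ c * b := by
  rcases eq_or_ne b 0 with rfl | hb0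
  · simpa using hab
  · exact (ENNReal.div_le_iff_le_mul (Or.inl hb0) (Or.inl hb)).1 h

namespace MeasureTheory

variable {Ω : Type*} {m0 : MeasurableSpace Ω} {μ : Measure Ω}

theorem Martingale.ae_exists_tendsto_of_nonneg [IsFiniteMeasure μ] {ℱ : Filtration ℕ m0}
    {f : ℕ → Ω → ℝ} (hf : Martingale f ℱ μ) (hnonneg : ∀ n, 0 ≤ f n) :
    ∀ᵐ ω ∂μ, ∃ c, Tendsto (fun n => f n ω) atTop (𝓝 c) := by
  refine hf.submartingale.exists_ae_tendsto_of_bdd (R := (∫ ω, f 0 ω ∂μ).toNNReal) fun n => ?_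
  have hnorm : ∀ ω, ‖f n ω‖ = f n ω := fun ω => Real.norm_of_nonneg (hnonneg n ω)
  have hconst : ∫ ω, f n ω ∂μ = ∫ ω, f 0 ω ∂μ := by
    simpa using (hf.setIntegral_eq (Nat.zero_le n) MeasurableSet.univ).symm
  rw [eLpNorm_one_eq_lintegral_enorm, ← ofReal_integral_norm_eq_lintegral_enorm (hf.integrable n)]
  simp only [hnorm, hconst]
  rfl

theorem setIntegral_preimage_eq_tsum {α : Type*} [Countable α] {φ : Ω → α}
    (hφ : ∀ a, MeasurableSet (φ ⁻¹' {a})) {F : Ω → ℝ} (hF : Integrable F μ) (S : Set α) :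
    ∫ ω in φ ⁻¹' S, F ω ∂μ = ∑' a : S, ∫ ω in φ ⁻¹' {(a : α)}, F ω ∂μ := by
  rw [← Set.biUnion_preimage_singleton, Set.biUnion_eq_iUnion]
  exact integral_iUnion (fun a => hφ a)
    (fun a b hab => Set.pairwiseDisjoint_fiber φ S a.2 b.2 (Subtype.coe_injective.ne hab))
    hF.integrableOn

def history (Y : ℕ → Ω → ℕ) (n : ℕ) (ω : Ω) : Fin (n + 1) → ℕ := fun i => Y i ω

theorem measurable_history {Y : ℕ → Ω → ℕ} (hY : ∀ n, Measurable (Y n)) (n : ℕ) :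
    Measurable (history Y n) :=
  measurable_pi_lambda _ fun i => hY i

def historyFiltration (Y : ℕ → Ω → ℕ) (hY : ∀ n, Measurable (Y n)) : Filtration ℕ m0 where
  seq n := MeasurableSpace.comap (history Y n) inferInstance
  mono' n m hnm := by
    have hrestrict : history Y n = (fun t => t ∘ Fin.castLE (by omega)) ∘ history Y m := rfl
    dsimp only
    rw [hrestrict, ← MeasurableSpace.comap_comp]
    exact MeasurableSpace.comap_mono (measurable_of_countable _).comap_le
  le' n := (measurable_history hY n).comap_le

variable {Y : ℕ → Ω → ℕ}

theorem martingale_historyFiltration [IsFiniteMeasure μ] (hY : ∀ n, Measurable (Y n))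
    (hint : ∀ n, Integrable (fun ω => (Y n ω : ℝ)) μ)
    (hatom : ∀ n (t : Fin (n + 1) → ℕ), μ (history Y n ⁻¹' {t}) ≠ 0 →
      ∫ ω in history Y n ⁻¹' {t}, (Y (n + 1) ω : ℝ) ∂μ
        = t (Fin.last n) * (μ (history Y n ⁻¹' {t})).toReal) :
    Martingale (fun n ω => (Y n ω : ℝ)) (historyFiltration Y hY) μ := by
  have hadp : StronglyAdapted (historyFiltration Y hY) (fun n ω => (Y n ω : ℝ)) := fun n =>
    ((measurable_of_countable fun t : Fin (n + 1) → ℕ => (t (Fin.last n) : ℝ)).comp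
      (Measurable.of_comap_le le_rfl)).stronglyMeasurable
  have hatom_eq : ∀ n (t : Fin (n + 1) → ℕ),
      ∫ ω in history Y n ⁻¹' {t}, (Y (n + 1) ω : ℝ) ∂μ
        = ∫ ω in history Y n ⁻¹' {t}, (Y n ω : ℝ) ∂μ := by
    intro n t
    by_cases h0 : μ (history Y n ⁻¹' {t}) = 0
    · simp [Measure.restrict_eq_zero.2 h0]
    have hYn : ∀ ω ∈ history Y n ⁻¹' {t}, (Y n ω : ℝ) = t (Fin.last n) := fun ω hω => by
      rw [← congrFun (Set.mem_singleton_iff.1 hω) (Fin.last n)]; rfl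
    rw [hatom n t h0,
      setIntegral_congr_fun (measurable_history hY n (measurableSet_singleton t)) hYn,
      setIntegral_const, smul_eq_mul, mul_comm, measureReal_def]
  have hstep : ∀ n s, MeasurableSet[historyFiltration Y hY n] s →
      ∫ ω in s, (Y (n + 1) ω : ℝ) ∂μ = ∫ ω in s, (Y n ω : ℝ) ∂μ := by
    rintro n _ ⟨S, -, rfl⟩
    have hfib : ∀ t, MeasurableSet (history Y n ⁻¹' {t}) :=
      fun t => measurable_history hY n (measurableSet_singleton t)
    rw [setIntegral_preimage_eq_tsum hfib (hint _), setIntegral_preimage_eq_tsum hfib (hint _)]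
    exact tsum_congr fun t => hatom_eq n t
  exact martingale_iff.2
    ⟨supermartingale_of_setIntegral_succ_le hadp hint fun n s hs => (hstep n s hs).le,
      submartingale_of_setIntegral_le_succ hadp hint fun n s hs => (hstep n s hs).ge⟩

theorem ae_exists_eventually_eq_of_martingale_natCast [IsFiniteMeasure μ] {ℱ : Filtration ℕ m0}
    (hY : Martingale (fun n ω => (Y n ω : ℝ)) ℱ μ) :
    ∀ᵐ ω ∂μ, ∃ r : ℕ, ∀ᶠ n in atTop, Y n ω = r :=
  (hY.ae_exists_tendsto_of_nonneg fun _ _ => Nat.cast_nonneg _).mono fun _ ⟨_, hc⟩ =>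
    exists_eventually_eq_of_tendsto_natCast hc

/-- Since the process is almost surely eventually constant, the measures of `{Z n = r}` and of
`{Z (n + m) = r ∧ Z n = r}` both tend to that of `{Z n = r eventually}`. -/
theorem measure_eventually_eq_eq_zero {β : Type*} [IsFiniteMeasure μ] {Z : ℕ → Ω → β} {r : β}
    (hmeas : ∀ n, MeasurableSet {ω | Z n ω = r})
    (hconst : ∀ᵐ ω ∂μ, ∃ b, ∀ᶠ n in atTop, Z n ω = b) {ε : ENNReal} (hε : 0 < ε) {m : ℕ}
    (hstay : ∃ᶠ n in atTop,
      μ {ω | Z (n + m) ω = r ∧ Z n ω = r} ≤ (1 - ε) * μ {ω | Z n ω = r}) :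
    μ {ω | ∀ᶠ n in atTop, Z n ω = r} = 0 := by
  set C := {ω | ∀ᶠ n in atTop, Z n ω = r}
  have hC : MeasurableSet C := by
    have : C = ⋃ N, ⋂ n ≥ N, {ω | Z n ω = r} := by ext; simp [C, eventually_atTop]
    rw [this]
    exact .iUnion fun N => .iInter fun n => .iInter fun _ => hmeas n
  have hlim : ∀ᵐ ω ∂μ, ∀ᶠ n in atTop,
      (Z n ω = r ↔ ω ∈ C) ∧ (Z (n + m) ω = r ∧ Z n ω = r ↔ ω ∈ C) := by
    filter_upwards [hconst] with ω ⟨b, hb⟩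
    have hmem : ω ∈ C ↔ b = r :=
      ⟨fun h => ((hb.and h).exists.elim fun _ h => h.1.symm.trans h.2), fun h => by rwa [h] at hb⟩
    filter_upwards [hb, (tendsto_add_atTop_nat m).eventually hb] with n hn hnm
    simp [hmem, hn, hnm]
  have hA : Tendsto (fun n => μ {ω | Z n ω = r}) atTop (𝓝 (μ C)) :=
    tendsto_measure_of_ae_tendsto_indicator_of_isFiniteMeasure atTop hC hmeas
      (hlim.mono fun _ h => h.mono fun _ h => h.1)
  have hAA : Tendsto (fun n => μ {ω | Z (n + m) ω = r ∧ Z n ω = r}) atTop (𝓝 (μ C)) :=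
    tendsto_measure_of_ae_tendsto_indicator_of_isFiniteMeasure atTop hC
      (fun n => (hmeas (n + m)).inter (hmeas n)) (hlim.mono fun _ h => h.mono fun _ h => h.2)
  have hle : μ C ≤ (1 - ε) * μ C := by
    obtain ⟨φ, hφ, hφstay⟩ := extraction_of_frequently_atTop hstay
    exact le_of_tendsto_of_tendsto' (hAA.comp hφ.tendsto_atTop)
      (ENNReal.Tendsto.const_mul (hA.comp hφ.tendsto_atTop)
        (Or.inr (ENNReal.sub_ne_top ENNReal.one_ne_top))) hφstay
  by_contra hne
  have hlt : (1 - ε) * μ C < 1 * μ C :=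
    (ENNReal.mul_lt_mul_iff_left hne (measure_ne_top μ C)).2
      (ENNReal.sub_lt_self ENNReal.one_ne_top one_ne_zero hε.ne')
  exact hle.not_gt (by rwa [one_mul] at hlt)

end MeasureTheory

namespace ArbGal

instance (d : ℕ) : DiscreteTopology (V d) := ⟨rfl⟩

instance (d : ℕ) (G : Subgroup (AutT d)) : BorelSpace ↥G := ⟨rfl⟩

variable {d : ℕ}

theorem continuous_Xfix (n : ℕ) : Continuous fun g : AutT d => Xfix d n g := by
  have hvalues : Continuous fun (g : AutT d) (w : Fin n → Fin d) =>
      (g : Equiv.Perm (V d)) (List.ofFn w) :=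
    continuous_pi fun _ =>
      (continuous_apply _).comp (continuous_induced_dom.comp continuous_subtype_val)
  exact (continuous_of_discreteTopology
    (f := fun f : (Fin n → Fin d) → V d => Set.ncard {w | f w = List.ofFn w})).comp hvalues

theorem measurable_Xfix (G : Subgroup (AutT d)) (n : ℕ) : Measurable fun g : G => Xfix d n g :=
  ((continuous_Xfix n).comp continuous_subtype_val).measurable

theorem Xfix_pos_of_fixesEnd {g : AutT d} (hg : FixesEnd d g) (n : ℕ) : 0 < Xfix d n g := by
  obtain ⟨ω, hω⟩ := hg
  exact (Set.ncard_pos (Set.toFinite _)).2 ⟨fun i : Fin n => ω i, hω n⟩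

-- `FPMartingale` conditions on the levels `1, …, n`, so the process is started at level `1`.
noncomputable def fixProcess (d : ℕ) (G : Subgroup (AutT d)) (k : ℕ) (g : G) : ℕ :=
  Xfix d (k + 1) g

theorem measurable_fixProcess (G : Subgroup (AutT d)) (k : ℕ) : Measurable (fixProcess d G k) :=
  measurable_Xfix G (k + 1)

variable {G : Subgroup (AutT d)} {μ : Measure G}

theorem FPMartingale.setIntegral_history (hmart : FPMartingale d G μ) (n : ℕ)
    (t : Fin (n + 1) → ℕ) (h0 : μ (history (fixProcess d G) n ⁻¹' {t}) ≠ 0) :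
    ∫ g in history (fixProcess d G) n ⁻¹' {t}, (fixProcess d G (n + 1) g : ℝ) ∂μ
      = t (Fin.last n) * (μ (history (fixProcess d G) n ⁻¹' {t})).toReal := by
  set t' : ℕ → ℝ := fun i => if h : i - 1 < n + 1 then (t ⟨i - 1, h⟩ : ℝ) else 0
  have hatom : history (fixProcess d G) n ⁻¹' {t}
      = {g : G | ∀ i, 1 ≤ i → i ≤ n + 1 → (Xfix d i g : ℝ) = t' i} := by
    ext g
    simp only [Set.mem_preimage, Set.mem_singleton_iff, funext_iff, history, fixProcess,
      Fin.forall_iff, Set.mem_ofPred_eq]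
    constructor
    · intro h i hi1 hin
      obtain ⟨j, rfl⟩ : ∃ j, i = j + 1 := ⟨i - 1, by omega⟩
      simp [t', h j (by omega), show j ≤ n by omega]
    · intro h j hj
      have hj1 := h (j + 1) (by omega) (by omega)
      simp only [t', add_tsub_cancel_right, dif_pos hj] at hj1
      exact_mod_cast hj1
  have hlast : t' (n + 1) = t (Fin.last n) := by simp [t', Fin.last]
  rw [hatom, ← hlast]
  exact hmart.2 (n + 1) (Nat.le_add_left 1 n) t' (hatom ▸ h0)

theorem FPMartingale.martingale [IsFiniteMeasure μ] (hmart : FPMartingale d G μ) :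
    Martingale (fun k g => (fixProcess d G k g : ℝ))
      (historyFiltration (fixProcess d G) (measurable_fixProcess G)) μ :=
  martingale_historyFiltration (measurable_fixProcess G)
    (fun k => hmart.1 (k + 1) (Nat.le_add_left 1 k)) hmart.setIntegral_history

theorem FPMartingale.ae_exists_eventually_eq [IsFiniteMeasure μ] (hmart : FPMartingale d G μ) :
    ∀ᵐ g : G ∂μ, ∃ r : ℕ, ∀ᶠ n in atTop, Xfix d n g = r := by
  filter_upwards [ae_exists_eventually_eq_of_martingale_natCast hmart.martingale] with g ⟨r, hr⟩
  obtain ⟨N, hN⟩ := eventually_atTop.1 hr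
  exact ⟨r, eventually_atTop.2 ⟨N + 1, fun n hn => by
    simpa [fixProcess, Nat.sub_add_cancel (by omega : 1 ≤ n)] using hN (n - 1) (by omega)⟩⟩

theorem martingale_strategy_general
    (d : ℕ) (G : Subgroup (AutT d))
    (μ : Measure ↥G) [IsProbabilityMeasure μ]
    (hmart : FPMartingale d G μ)
    (hcond : ∀ r : ℕ, 1 ≤ r → ∃ ε : ENNReal, 0 < ε ∧ ∃ m : ℕ,
      ∀ N₀ : ℕ, ∃ n : ℕ, N₀ ≤ n ∧ 1 ≤ n ∧
        μ {g : ↥G | Xfix d (n + m) (g : AutT d) = r ∧ Xfix d n (g : AutT d) = r}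
            / μ {g : ↥G | Xfix d n (g : AutT d) = r} ≤ 1 - ε) :
    μ {g : ↥G | ∃ N : ℕ, ∀ n : ℕ, N ≤ n → Xfix d n (g : AutT d) = 0} = 1 ∧
    μ {g : ↥G | FixesEnd d (g : AutT d)} = 0 := by
  have hconst := hmart.ae_exists_eventually_eq
  have hstuck : ∀ r, 1 ≤ r → μ {g : G | ∀ᶠ n in atTop, Xfix d n g = r} = 0 := by
    intro r hr
    obtain ⟨ε, hε, m, hstay⟩ := hcond r hr
    refine measure_eventually_eq_eq_zero (fun n => measurable_Xfix G n (measurableSet_singleton r))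
      hconst hε (m := m) (frequently_atTop.2 fun N₀ => ?_)
    obtain ⟨n, hn, -, hdiv⟩ := hstay N₀
    exact ⟨n, hn,
      ENNReal.le_mul_of_div_le (measure_mono fun g hg => hg.2) (measure_ne_top μ _) hdiv⟩
  have hzero : ∀ᵐ g : G ∂μ, ∀ᶠ n in atTop, Xfix d n g = 0 := by
    filter_upwards [hconst, ae_all_iff.2 fun r =>
      measure_eq_zero_iff_ae_notMem.1 (hstuck (r + 1) (Nat.le_add_left 1 r))] with g ⟨r, hr⟩ hnot
    cases r with
    | zero => exact hr
    | succ r => exact absurd hr (hnot r)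
  simp only [← eventually_atTop]
  refine ⟨(measure_congr (ae_eq_univ.2 (ae_iff.1 hzero))).trans measure_univ,
    measure_eq_zero_iff_ae_notMem.2 (hzero.mono fun g hev hg => ?_)⟩
  obtain ⟨n, hn⟩ := hev.exists
  exact (Xfix_pos_of_fixesEnd hg n).ne' hn

/-- **Martingale strategy.** Let `G ≤ Aut(T)` be a closed subgroup whose
fixed-point process `{X_n}` is a martingale, and such that for every `r > 0` there are
`ε = ε(r) > 0` and `m = m(r)` with `μ_G(X_{n+m} = r | X_n = r) ≤ 1 − ε` for infinitely
many `n ≥ 1`.  Then the fixed-point process of `G` is eventually zero `μ_G`-almost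
surely; in particular `FPP(G) = 0`. -/
theorem martingale_strategy
    (d : ℕ) (hd : 2 ≤ d) (G : Subgroup (AutT d))
    (hclosed : IsClosed (G : Set (AutT d)))
    (μ : Measure ↥G) [IsProbabilityMeasure μ] [μ.IsMulLeftInvariant]
    (hmart : FPMartingale d G μ)
    (hcond : ∀ r : ℕ, 1 ≤ r → ∃ ε : ENNReal, 0 < ε ∧ ∃ m : ℕ,
      ∀ N₀ : ℕ, ∃ n : ℕ, N₀ ≤ n ∧ 1 ≤ n ∧
        μ {g : ↥G | Xfix d (n + m) (g : AutT d) = r ∧ Xfix d n (g : AutT d) = r}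
            / μ {g : ↥G | Xfix d n (g : AutT d) = r} ≤ 1 - ε) :
    μ {g : ↥G | ∃ N : ℕ, ∀ n : ℕ, N ≤ n → Xfix d n (g : AutT d) = 0} = 1 ∧
    μ {g : ↥G | FixesEnd d (g : AutT d)} = 0 :=
  martingale_strategy_general d G μ hmart hcond

end ArbGal
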